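/- For every n ≥ 2 there exists a ℂ-algebra homomorphism ψ: ℰ_n(1) → ℂ[W_n] with ψ(T_i) = s_i and ψ(E_i) = ½(1 + t_it_{i+1}) for all 1 ≤ i ≤ n−1. Equivalently, the elements σ_i := s_i and e_i := ½(1 + t_it_{i+1}) of the group algebra ℂ[W_n] satisfy all the defining relations of ℰ_n(1). -/

import Mathlib

/-! In `W_n`, conjugation by `s_j` permutes the `t_k` through the transposition `(j, j+1)`. Hence
`s_i` and `a_i = t_i t_{i+1}` satisfy: `s_i² = a_i² = 1`, the Coxeter relations of `S_n`, the `a_i`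
commute, and `s_j a_i s_j` equals `a_i` unless `|i - j| = 1`, where it equals `a_i a_j`. These
relations alone imply every defining relation of `ℰ_n(1)` for `T_i ↦ s_i`, `E_i ↦ ½(1 + a_i)`,
by short computations in any ring. For instance `s_j (1 + a_i) = (1 + a_i a_j) s_j` together with
`(1 + a_i)(1 + a_i a_j) = (1 + a_i)(1 + a_j)` gives `E_i T_j E_i = E_i E_j T_j`. -/

noncomputable section

open FreeAlgebra

/-- Generators of the algebra `ℰ_n(1)`: `T i` and `E i` for `i` ranging over
`n - 1` indices. -/
inductive Gen (n : ℕ) : Type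
  | T : Fin (n - 1) → Gen n
  | E : Fin (n - 1) → Gen n

/-- The free `ℂ`-algebra on the generators. -/
abbrev FA (n : ℕ) : Type := FreeAlgebra ℂ (Gen n)

def fT {n : ℕ} (i : Fin (n - 1)) : FA n := ι ℂ (Gen.T i)
def fE {n : ℕ} (i : Fin (n - 1)) : FA n := ι ℂ (Gen.E i)

/-- The defining relations of `ℰ_n(1)`. -/
inductive E1Rel (n : ℕ) : FA n → FA n → Prop
  | TTfar {i j : Fin (n - 1)} : 1 < Nat.dist i j →
      E1Rel n (fT i * fT j) (fT j * fT i)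
  | braid {i j : Fin (n - 1)} : Nat.dist i j = 1 →
      E1Rel n (fT i * fT j * fT i) (fT j * fT i * fT j)
  | Eidem (i : Fin (n - 1)) : E1Rel n (fE i * fE i) (fE i)
  | EE (i j : Fin (n - 1)) : E1Rel n (fE i * fE j) (fE j * fE i)
  | ET (i : Fin (n - 1)) : E1Rel n (fE i * fT i) (fT i * fE i)
  | ETfar {i j : Fin (n - 1)} : 1 < Nat.dist i j →
      E1Rel n (fE i * fT j) (fT j * fE i)
  | ETT {i j : Fin (n - 1)} : Nat.dist i j = 1 →
      E1Rel n (fE j * (fT i * fT j)) (fT i * fT j * fE i)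
  | EET {i j : Fin (n - 1)} : Nat.dist i j = 1 →
      E1Rel n (fE i * fE j * fT j) (fE i * fT j * fE i)
  | ETE {i j : Fin (n - 1)} : Nat.dist i j = 1 →
      E1Rel n (fE i * fT j * fE i) (fT j * (fE i * fE j))
  | Tsq (i : Fin (n - 1)) : E1Rel n (fT i * fT i) 1

/-- The algebra `ℰ_n(1)`. -/
abbrev En1 (n : ℕ) : Type := RingQuot (E1Rel n)

/-- The generator `T i` of `ℰ_n(1)`. -/
def T {n : ℕ} (i : Fin (n - 1)) : En1 n := RingQuot.mkAlgHom ℂ (E1Rel n) (fT i)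

/-- The generator `E i` of `ℰ_n(1)`. -/
def E {n : ℕ} (i : Fin (n - 1)) : En1 n := RingQuot.mkAlgHom ℂ (E1Rel n) (fE i)

noncomputable section

/-- `C_2^n`, written multiplicatively. -/
abbrev C2n (n : ℕ) : Type := Fin n → Multiplicative (ZMod 2)

/-- The permutation action of `S_n` on `C_2^n` by permuting coordinates. -/
def permAct (n : ℕ) : Equiv.Perm (Fin n) →* MulAut (C2n n) where
  toFun σ :=
    { toFun := fun v i => v (σ⁻¹ i)
      invFun := fun v i => v (σ i)
      left_inv := fun v => funext fun i => by simp
      right_inv := fun v => funext fun i => by simp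
      map_mul' := fun v w => rfl }
  map_one' := by
    ext v i
    simp
  map_mul' := fun σ τ => by
    ext v i
    simp [mul_inv_rev]

/-- The hyperoctahedral group `W_n = C_2 ≀ S_n`, realized as the semidirect
product `(ZMod 2)^n ⋊ S_n`. -/
abbrev W (n : ℕ) : Type := C2n n ⋊[permAct n] Equiv.Perm (Fin n)

/-- The element `t_i` of `W_n`: `i`-th standard basis vector, trivial permutation. -/
def tgen (n : ℕ) (i : Fin n) : W n :=
  SemidirectProduct.inl (fun j => if j = i then Multiplicative.ofAdd 1 else 1)

/-- The element `s_i` of `W_n`: the adjacent transposition `(i, i+1)`, trivial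
vector part. -/
def sgen (n : ℕ) (i : ℕ) (h : i + 1 < n) : W n :=
  SemidirectProduct.inr (Equiv.swap ⟨i, by omega⟩ ⟨i + 1, h⟩)

section RingIdentities

variable {K A : Type*} [Field K] [Ring A] [Algebra K A] {s x y : A}

lemma isIdempotentElem_inv_two_smul_one_add (hx : x * x = 1) :
    IsIdempotentElem ((2⁻¹ : K) • (1 + x)) := by
  have hsq : (1 + x) * (1 + x) = (2 : K) • (1 + x) := by
    simp only [two_smul, mul_add, add_mul, hx, one_mul, mul_one]
    abel
  rw [IsIdempotentElem, smul_mul_smul_comm, hsq, smul_smul]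
  congr 1
  simpa only [inv_inv] using mul_self_mul_inv (2⁻¹ : K)

lemma SemiconjBy.smul_one_add (h : SemiconjBy s x y) (c : K) :
    SemiconjBy s (c • (1 + x)) (c • (1 + y)) :=
  ((SemiconjBy.one_right s).add_right h).smul_right c

lemma Commute.smul_one_add (h : Commute x y) (c : K) :
    Commute (c • (1 + x)) (c • (1 + y)) :=
  (((Commute.one_left _).add_left ((Commute.one_right x).add_right h)).smul_left c).smul_right c

lemma one_add_mul_mul_one_add (hx : x * x = 1) (hs : SemiconjBy s x (x * y)) :
    (1 + x) * s * (1 + x) = (1 + x) * (1 + y) * s := by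
  have hs' : s * (1 + x) = (1 + x * y) * s := (SemiconjBy.one_right s).add_right hs
  rw [mul_assoc, hs', ← mul_assoc]
  congr 1
  simp only [mul_add, add_mul, mul_one, one_mul, ← mul_assoc, hx]
  abel

lemma mul_one_add_mul_one_add (hy : y * y = 1) (hs : SemiconjBy s x (x * y))
    (hsy : Commute s y) : s * ((1 + x) * (1 + y)) = (1 + x) * (1 + y) * s := by
  have hs' : s * (1 + x) = (1 + x * y) * s := (SemiconjBy.one_right s).add_right hs
  rw [← mul_assoc, hs', mul_assoc, ((Commute.one_right s).add_right hsy).eq, ← mul_assoc]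
  congr 1
  simp only [mul_add, add_mul, mul_one, one_mul, mul_assoc, hy]
  abel

end RingIdentities

/-- The relations satisfied in `W_n` by `s i = s_i` and `a i = t_i t_{i+1}`. -/
structure HyperoctahedralRelations {M : Type*} [Monoid M] {n : ℕ} (s a : Fin (n - 1) → M) :
    Prop where
  s_mul_self (i : Fin (n - 1)) : s i * s i = 1
  commute_s_of_far {i j : Fin (n - 1)} : 1 < Nat.dist i j → Commute (s i) (s j)
  braid {i j : Fin (n - 1)} : Nat.dist i j = 1 → s i * s j * s i = s j * s i * s j
  a_mul_self (i : Fin (n - 1)) : a i * a i = 1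
  commute_a (i j : Fin (n - 1)) : Commute (a i) (a j)
  commute_s_a (i : Fin (n - 1)) : Commute (s i) (a i)
  commute_s_a_of_far {i j : Fin (n - 1)} : 1 < Nat.dist i j → Commute (s j) (a i)
  semiconjBy_s_a_of_adj {i j : Fin (n - 1)} :
    Nat.dist i j = 1 → SemiconjBy (s j) (a i) (a i * a j)

namespace HyperoctahedralRelations

variable {M N : Type*} [Monoid M] [Monoid N] {n : ℕ} {s a : Fin (n - 1) → M}

lemma map (h : HyperoctahedralRelations s a) (f : M →* N) :
    HyperoctahedralRelations (fun i => f (s i)) (fun i => f (a i)) where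
  s_mul_self i := by rw [← map_mul, h.s_mul_self, map_one]
  commute_s_of_far hij := (h.commute_s_of_far hij).map f
  braid hij := by simp only [← map_mul, h.braid hij]
  a_mul_self i := by rw [← map_mul, h.a_mul_self, map_one]
  commute_a i j := (h.commute_a i j).map f
  commute_s_a i := (h.commute_s_a i).map f
  commute_s_a_of_far hij := (h.commute_s_a_of_far hij).map f
  semiconjBy_s_a_of_adj hij := by simpa only [map_mul] using (h.semiconjBy_s_a_of_adj hij).map f

lemma semiconjBy_s_mul_s_of_adj (h : HyperoctahedralRelations s a) {i j : Fin (n - 1)}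
    (hij : Nat.dist i j = 1) : SemiconjBy (s i * s j) (a i) (a j) := by
  have hji : Nat.dist j i = 1 := by rwa [Nat.dist_comm]
  have key := (SemiconjBy.mul_right (h.commute_s_a i) (h.semiconjBy_s_a_of_adj hji)).mul_left
    (h.semiconjBy_s_a_of_adj hij)
  rwa [← mul_assoc, (h.commute_a i j).eq, mul_assoc, h.a_mul_self, mul_one] at key

end HyperoctahedralRelations

def e1GenImage {A : Type*} [Ring A] [Algebra ℂ A] {n : ℕ} (s a : Fin (n - 1) → A) :
    Gen n → A
  | .T i => s i
  | .E i => (2⁻¹ : ℂ) • (1 + a i)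

theorem HyperoctahedralRelations.exists_algHom {A : Type*} [Ring A] [Algebra ℂ A] {n : ℕ}
    {s a : Fin (n - 1) → A} (h : HyperoctahedralRelations s a) :
    ∃ ψ : En1 n →ₐ[ℂ] A, ∀ i, ψ (T i) = s i ∧ ψ (E i) = (2⁻¹ : ℂ) • (1 + a i) := by
  set φ := FreeAlgebra.lift ℂ (e1GenImage s a)
  have hT (i : Fin (n - 1)) : φ (fT i) = s i := FreeAlgebra.lift_ι_apply _ _
  have hE (i : Fin (n - 1)) : φ (fE i) = (2⁻¹ : ℂ) • (1 + a i) := FreeAlgebra.lift_ι_apply _ _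
  have hrel : ∀ ⦃x y : FA n⦄, E1Rel n x y → φ x = φ y := by
    intro x y hxy
    cases hxy with
    | TTfar hij => simp only [map_mul, hT, (h.commute_s_of_far hij).eq]
    | braid hij => simp only [map_mul, hT, h.braid hij]
    | Eidem i => rw [map_mul, hE, isIdempotentElem_inv_two_smul_one_add (h.a_mul_self i)]
    | EE i j => simp only [map_mul, hE, ((h.commute_a i j).smul_one_add _).eq]
    | ET i =>
      simp only [map_mul, hE, hT]
      exact (SemiconjBy.smul_one_add (h.commute_s_a i) _).eq.symm
    | ETfar hij =>
      simp only [map_mul, hE, hT]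
      exact (SemiconjBy.smul_one_add (h.commute_s_a_of_far hij) _).eq.symm
    | ETT hij =>
      simp only [map_mul, hE, hT]
      exact ((h.semiconjBy_s_mul_s_of_adj hij).smul_one_add _).eq.symm
    | EET hij =>
      simp only [map_mul, hE, hT, smul_mul_assoc, mul_smul_comm]
      rw [one_add_mul_mul_one_add (h.a_mul_self _) (h.semiconjBy_s_a_of_adj hij)]
    | ETE hij =>
      simp only [map_mul, hE, hT, smul_mul_assoc, mul_smul_comm]
      have hs := h.semiconjBy_s_a_of_adj hij
      rw [one_add_mul_mul_one_add (h.a_mul_self _) hs,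
        mul_one_add_mul_one_add (h.a_mul_self _) hs (h.commute_s_a _)]
    | Tsq i => rw [map_mul, map_one, hT, h.s_mul_self]
  refine ⟨RingQuot.liftAlgHom ℂ ⟨φ, hrel⟩, fun i => ⟨?_, ?_⟩⟩
  · rw [T, RingQuot.liftAlgHom_mkAlgHom_apply, hT]
  · rw [E, RingQuot.liftAlgHom_mkAlgHom_apply, hE]

lemma Equiv.swap_braid {α : Type*} [DecidableEq α] {a b c : α} (hab : a ≠ b) (hac : a ≠ c)
    (hbc : b ≠ c) :
    Equiv.swap a b * Equiv.swap b c * Equiv.swap a b =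
      Equiv.swap b c * Equiv.swap a b * Equiv.swap b c := by
  calc Equiv.swap a b * Equiv.swap b c * Equiv.swap a b
      = Equiv.swap b a * Equiv.swap c b * Equiv.swap b a := by
        rw [Equiv.swap_comm a b, Equiv.swap_comm b c]
    _ = Equiv.swap a c := Equiv.swap_mul_swap_mul_swap hbc.symm hac.symm
    _ = Equiv.swap c a := Equiv.swap_comm a c
    _ = Equiv.swap b c * Equiv.swap a b * Equiv.swap b c :=
        (Equiv.swap_mul_swap_mul_swap hab hac).symm

namespace Hyperoctahedral

open SemidirectProduct

variable {n : ℕ}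

lemma C2n_mul_self (v : C2n n) : v * v = 1 := by
  funext k
  change v k * v k = 1
  generalize v k = z
  revert z
  decide

lemma tgen_mul_self (k : Fin n) : tgen n k * tgen n k = 1 := by
  rw [tgen, ← map_mul, C2n_mul_self, map_one]

lemma commute_tgen (k l : Fin n) : Commute (tgen n k) (tgen n l) :=
  (Commute.all _ _).map inl

lemma inr_mul_tgen (σ : Equiv.Perm (Fin n)) (k : Fin n) :
    (inr σ : W n) * tgen n k = tgen n (σ k) * inr σ := by
  rw [tgen, tgen, ← mul_inv_eq_iff_eq_mul, ← map_inv, ← inl_aut]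
  congr 1
  funext j
  simp [permAct, Equiv.symm_apply_eq]

def lowerFin (i : Fin (n - 1)) : Fin n := ⟨i, by omega⟩

def upperFin (i : Fin (n - 1)) : Fin n := ⟨i + 1, by omega⟩

def swapGen (i : Fin (n - 1)) : W n := sgen n i (by omega)

def pairGen (i : Fin (n - 1)) : W n := tgen n (lowerFin i) * tgen n (upperFin i)

lemma swapGen_eq (i : Fin (n - 1)) :
    swapGen i = inr (Equiv.swap (lowerFin i) (upperFin i)) := rfl

lemma upperFin_eq_lowerFin {i j : Fin (n - 1)} (h : (i : ℕ) + 1 = j) :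
    upperFin i = lowerFin j :=
  Fin.ext h

lemma swapGen_mul_pairGen (i j : Fin (n - 1)) :
    swapGen j * pairGen i = tgen n (Equiv.swap (lowerFin j) (upperFin j) (lowerFin i)) *
      tgen n (Equiv.swap (lowerFin j) (upperFin j) (upperFin i)) * swapGen j := by
  rw [pairGen, swapGen_eq, ← mul_assoc, inr_mul_tgen, mul_assoc, inr_mul_tgen, mul_assoc]

lemma tgen_mul_tgen_mul_tgen_mul_tgen (k l m : Fin n) :
    tgen n k * tgen n l * (tgen n l * tgen n m) = tgen n k * tgen n m := by
  rw [mul_assoc, ← mul_assoc (tgen n l), tgen_mul_self, one_mul]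

lemma pairGen_mul_self (i : Fin (n - 1)) : pairGen i * pairGen i = 1 := by
  rw [pairGen, (commute_tgen _ _).mul_mul_mul_comm, tgen_mul_self, tgen_mul_self, one_mul]

lemma commute_pairGen (i j : Fin (n - 1)) : Commute (pairGen i) (pairGen j) :=
  ((commute_tgen _ _).mul_left (commute_tgen _ _)).mul_right
    ((commute_tgen _ _).mul_left (commute_tgen _ _))

lemma hyperoctahedralRelations_swapGen_pairGen :
    HyperoctahedralRelations (swapGen (n := n)) pairGen where
  s_mul_self i := by rw [swapGen_eq, ← map_mul, Equiv.swap_mul_self, map_one]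
  commute_s_of_far {i j} hij := by
    unfold Nat.dist at hij
    exact ((Equiv.Perm.disjoint_swap_swap (by grind [lowerFin, upperFin])).commute).map inr
  braid {i j} hij := by
    obtain hj | hi : (i : ℕ) + 1 = j ∨ (j : ℕ) + 1 = i := by unfold Nat.dist at hij; omega
    · simp only [swapGen_eq, ← map_mul, upperFin_eq_lowerFin hj]
      rw [Equiv.swap_braid] <;> grind [lowerFin, upperFin]
    · simp only [swapGen_eq, ← map_mul, upperFin_eq_lowerFin hi]
      rw [Equiv.swap_braid] <;> grind [lowerFin, upperFin]
  a_mul_self := pairGen_mul_self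
  commute_a := commute_pairGen
  commute_s_a i := by
    rw [Commute, SemiconjBy, swapGen_mul_pairGen, Equiv.swap_apply_left, Equiv.swap_apply_right,
      (commute_tgen _ _).eq, pairGen]
  commute_s_a_of_far {i j} hij := by
    unfold Nat.dist at hij
    have hlo : Equiv.swap (lowerFin j) (upperFin j) (lowerFin i) = lowerFin i :=
      Equiv.swap_apply_of_ne_of_ne (by grind [lowerFin, upperFin]) (by grind [lowerFin, upperFin])
    have hup : Equiv.swap (lowerFin j) (upperFin j) (upperFin i) = upperFin i :=
      Equiv.swap_apply_of_ne_of_ne (by grind [lowerFin, upperFin]) (by grind [lowerFin, upperFin])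
    rw [Commute, SemiconjBy, swapGen_mul_pairGen, hlo, hup, pairGen]
  semiconjBy_s_a_of_adj {i j} hij := by
    obtain hj | hi : (i : ℕ) + 1 = j ∨ (j : ℕ) + 1 = i := by unfold Nat.dist at hij; omega
    · have hlo : Equiv.swap (lowerFin j) (upperFin j) (lowerFin i) = lowerFin i :=
        Equiv.swap_apply_of_ne_of_ne (by grind [lowerFin, upperFin]) (by grind [lowerFin, upperFin])
      rw [SemiconjBy, swapGen_mul_pairGen, hlo, pairGen, pairGen, upperFin_eq_lowerFin hj,
        Equiv.swap_apply_left, tgen_mul_tgen_mul_tgen_mul_tgen]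
    · have hup : Equiv.swap (lowerFin j) (upperFin j) (upperFin i) = upperFin i :=
        Equiv.swap_apply_of_ne_of_ne (by grind [lowerFin, upperFin]) (by grind [lowerFin, upperFin])
      rw [SemiconjBy, swapGen_mul_pairGen, hup, (commute_pairGen i j).eq, pairGen, pairGen,
        upperFin_eq_lowerFin hi, Equiv.swap_apply_right, tgen_mul_tgen_mul_tgen_mul_tgen]

end Hyperoctahedral

/-- There is a `ℂ`-algebra homomorphism `ψ : ℰ_n(1) → ℂ[W_n]` with
`ψ(T_i) = s_i` and `ψ(E_i) = ½(1 + t_i t_{i+1})`. -/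
theorem stmt15 (n : ℕ) :
    ∃ ψ : En1 n →ₐ[ℂ] MonoidAlgebra ℂ (W n),
      ∀ i : Fin (n - 1),
        ψ (T i) = MonoidAlgebra.of ℂ (W n)
            (sgen n i (by have := i.isLt; omega)) ∧
        ψ (E i) = (2⁻¹ : ℂ) •
          (1 + MonoidAlgebra.of ℂ (W n)
            (tgen n ⟨i, by have := i.isLt; omega⟩ *
             tgen n ⟨i + 1, by have := i.isLt; omega⟩)) :=
  (Hyperoctahedral.hyperoctahedralRelations_swapGen_pairGen.map
    (MonoidAlgebra.of ℂ (W n))).exists_algHom
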